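/- Let (μ_j) be a sequence of Borel probability measures on ℝⁿ converging narrowly to a probability measure μ. Then for every lower semicontinuous function ψ: ℝⁿ → [0,∞], the L^∞(μ)-essential supremum of ψ is at most the liminf over j of the L^∞(μ_j)-essential supremum of ψ. -/

import Mathlib

open MeasureTheory Filter Topology
open scoped ENNReal RealInnerProductSpace

noncomputable section

/-- Euclidean space `ℝⁿ`. -/
abbrev Eu (n : ℕ) : Type := EuclideanSpace ℝ (Fin n)

namespace PL

/-- `γ` is a coupling of `μ` and `ν`, i.e. a probability measure on the product whose
marginals are `μ` and `ν`. -/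
def IsCoupling {n : ℕ} (γ : Measure (Eu n × Eu n)) (μ ν : Measure (Eu n)) : Prop :=
  IsProbabilityMeasure γ ∧ γ.map Prod.fst = μ ∧ γ.map Prod.snd = ν

/-- The `q`-Wasserstein extended distance, `1 ≤ q ≤ ∞`:  the infimum over couplings `γ`
of the `L^q(γ)`-norm of the Euclidean distance.  For `q = ∞` this is `W_∞`. -/
def W {n : ℕ} (q : ℝ≥0∞) (μ ν : Measure (Eu n)) : ℝ≥0∞ :=
  ⨅ (γ : Measure (Eu n × Eu n)) (_ : IsCoupling γ μ ν),
    eLpNorm (fun z : Eu n × Eu n => dist z.1 z.2) q γ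

/-- Membership in `P_q(ℝⁿ)`: a Borel probability measure with finite `q`-moment
(equivalently, bounded support when `q = ∞`). -/
def MemPq {n : ℕ} (q : ℝ≥0∞) (μ : Measure (Eu n)) : Prop :=
  IsProbabilityMeasure μ ∧ eLpNorm (fun x : Eu n => ‖x‖) q μ < ∞

/-- The density of `μ` with respect to the Lebesgue measure. -/
def dens {n : ℕ} (μ : Measure (Eu n)) : Eu n → ℝ :=
  fun x => (μ.rnDeriv volume x).toReal

/-- The `L^p` distance between the Lebesgue densities of two measures. -/
def dLp {n : ℕ} (p : ℝ≥0∞) (μ ν : Measure (Eu n)) : ℝ≥0∞ :=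
  eLpNorm (fun x => dens μ x - dens ν x) p volume

/-- Membership in `PL_q^p(ℝⁿ)`: an element of `P_q(ℝⁿ)` that is absolutely continuous
w.r.t. Lebesgue measure, with density in `L^p(ℝⁿ)`. -/
def MemPL {n : ℕ} (q p : ℝ≥0∞) (μ : Measure (Eu n)) : Prop :=
  MemPq q μ ∧ μ ≪ (volume : Measure (Eu n)) ∧ MemLp (dens μ) p volume

/-- The metric `𝔡_q^p(μ,ν) = W_q(μ,ν) + ‖dμ/dLⁿ − dν/dLⁿ‖_{L^p}`. -/
def dPL {n : ℕ} (q p : ℝ≥0∞) (μ ν : Measure (Eu n)) : ℝ≥0∞ :=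
  W q μ ν + dLp p μ ν

/-- Divergence of a vector field on `ℝⁿ`. -/
def divg {n : ℕ} (Ψ : Eu n → Eu n) (x : Eu n) : ℝ :=
  ∑ i, ⟪fderiv ℝ Ψ x (EuclideanSpace.single i 1), EuclideanSpace.single i 1⟫

/-- The total variation `‖δf‖` of `f : ℝⁿ → ℝ`. -/
def totalVar {n : ℕ} (f : Eu n → ℝ) : ℝ≥0∞ :=
  ⨆ (Ψ : Eu n → Eu n) (_ : ContDiff ℝ 1 Ψ ∧ HasCompactSupport Ψ ∧ ∀ x, ‖Ψ x‖ ≤ 1),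
    ENNReal.ofReal (∫ x, f x * divg Ψ x)

/-- The exponent `n/(n-1)` (equal to `∞` when `n = 1`). -/
def sobolevConj (n : ℕ) : ℝ≥0∞ := (n : ℝ≥0∞) / ((n : ℝ≥0∞) - 1)

/-- The isoperimetric ratio `Isop(f Lⁿ) = ‖δf‖ / ‖f‖_{L^{n/(n-1)}}`. -/
def Isop {n : ℕ} (f : Eu n → ℝ) : ℝ≥0∞ := totalVar f / eLpNorm f (sobolevConj n) volume

/-- The isoperimetric ratio of a measure, via its Lebesgue density. -/
def IsopM {n : ℕ} (μ : Measure (Eu n)) : ℝ≥0∞ := Isop (dens μ)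

/-- Narrow convergence of measures along a filter. -/
def NarrowTendsto {α : Type*} [TopologicalSpace α] [MeasurableSpace α]
    {ι : Type*} (l : Filter ι) (μ : ι → Measure α) (ν : Measure α) : Prop :=
  ∀ f : BoundedContinuousFunction α ℝ,
    Tendsto (fun j => ∫ x, f x ∂(μ j)) l (𝓝 (∫ x, f x ∂ν))

/-- Narrow continuity of a curve of measures on a set of times. -/
def NarrowContinuousOn {α : Type*} [TopologicalSpace α] [MeasurableSpace α]
    (μ : ℝ → Measure α) (I : Set ℝ) : Prop :=
  ∀ f : BoundedContinuousFunction α ℝ, ContinuousOn (fun t => ∫ x, f x ∂(μ t)) I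

/-- `σ`-convergence: `L^{n/(n-1)}`-convergence of the Lebesgue densities. -/
def SigmaTendsto {n : ℕ} {ι : Type*} (l : Filter ι) (μ : ι → Measure (Eu n))
    (ν : Measure (Eu n)) : Prop :=
  Tendsto (fun j => dLp (sobolevConj n) (μ j) ν) l (𝓝 0)

/-- Test functions `φ ∈ C_c^∞((0,T) × ℝⁿ)`. -/
def IsTestFun {n : ℕ} (T : ℝ) (φ : ℝ → Eu n → ℝ) : Prop :=
  ContDiff ℝ (⊤ : ℕ∞) (fun z : ℝ × Eu n => φ z.1 z.2) ∧
  HasCompactSupport (fun z : ℝ × Eu n => φ z.1 z.2) ∧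
  tsupport (fun z : ℝ × Eu n => φ z.1 z.2) ⊆ Set.Ioo 0 T ×ˢ (Set.univ : Set (Eu n))

/-- `(μ, v)` is a weak solution of the continuity equation `∂_t μ_t + div(v_t μ_t) = 0`
on `[0,T]`, with the integrability condition `∫₀ᵀ ‖v_t‖_{L¹(μ_t)} dt < ∞`. -/
def IsWeakSolution {n : ℕ} (T : ℝ) (μ : ℝ → Measure (Eu n)) (v : ℝ → Eu n → Eu n) : Prop :=
  Measurable (fun z : ℝ × Eu n => v z.1 z.2) ∧
  (∫⁻ t in Set.Ioc (0:ℝ) T, ∫⁻ x, (‖v t x‖₊ : ℝ≥0∞) ∂(μ t)) < ∞ ∧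
  ∀ φ : ℝ → Eu n → ℝ, IsTestFun T φ →
    (∫ t in Set.Ioc (0:ℝ) T,
      ∫ x, (deriv (fun s => φ s x) t + ⟪gradient (fun y => φ t y) x, v t x⟫) ∂(μ t)) = 0

/-- A narrowly continuous weak solution of the continuity equation on `[0,T]`,
made of probability measures. -/
def IsNCWeakSol {n : ℕ} (T : ℝ) (μ : ℝ → Measure (Eu n)) (v : ℝ → Eu n → Eu n) : Prop :=
  (∀ t ∈ Set.Icc (0:ℝ) T, IsProbabilityMeasure (μ t)) ∧
  NarrowContinuousOn μ (Set.Icc 0 T) ∧ IsWeakSolution T μ v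

/-- Absolute continuity of a curve `γ : [0,T] → (α, d)` for an `ℝ≥0∞`-valued distance:
the increments are bounded by integrals of an `L¹` function. -/
def IsACCurve {α : Type*} (d : α → α → ℝ≥0∞) (γ : ℝ → α) (T : ℝ) : Prop :=
  ∃ m : ℝ → ℝ, IntegrableOn m (Set.Icc 0 T) volume ∧
    ∀ s t : ℝ, s ∈ Set.Icc 0 T → t ∈ Set.Icc 0 T → s ≤ t →
      d (γ s) (γ t) ≤ ENNReal.ofReal (∫ r in Set.Ioc s t, m r)

/-- The curve `γ` has metric derivative `L` at time `t ∈ I` (relative to `I`):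
`d(γ(t+h), γ(t)) / |h| → L` as `h → 0` with `t + h ∈ I`. -/
def HasMetricDerivAt {α : Type*} (d : α → α → ℝ≥0∞) (γ : ℝ → α) (I : Set ℝ) (t : ℝ)
    (L : ℝ) : Prop :=
  Tendsto (fun h : ℝ => (d (γ t) (γ (t + h))).toReal / |h|)
    (𝓝[{h : ℝ | h ≠ 0 ∧ t + h ∈ I}] 0) (𝓝 L)

/-- Local `2`-absolute continuity of a curve `γ : [0,∞) → (α,d)`. -/
def IsAC2Loc {α : Type*} (d : α → α → ℝ≥0∞) (γ : ℝ → α) : Prop :=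
  ∃ m : ℝ → ℝ, (∀ T : ℝ, 0 < T → MemLp m 2 (volume.restrict (Set.Icc 0 T))) ∧
    ∀ s t : ℝ, 0 ≤ s → s ≤ t → d (γ s) (γ t) ≤ ENNReal.ofReal (∫ r in Set.Ioc s t, m r)

/-- A partition of steps: positive steps, bounded above, with divergent sum. -/
structure StepPartition where
  τ : ℕ → ℝ
  pos : ∀ j, 0 < τ j
  bdd : ∃ M : ℝ, ∀ j, τ j ≤ M
  diverges : Tendsto (fun N => ∑ j ∈ Finset.range N, τ j) atTop atTop

/-- The partition of times associated to a partition of steps. -/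
def StepPartition.time (P : StepPartition) (j : ℕ) : ℝ := ∑ k ∈ Finset.range j, P.τ k

/-- The mesh `|τ̄| = sup_j τ_j` of a partition of steps. -/
def StepPartition.mesh (P : StepPartition) : ℝ≥0∞ := ⨆ j, ENNReal.ofReal (P.τ j)

/-- `y` belongs to the resolvent `J_τ[x̄]`: it minimizes `z ↦ φ(z) + d(z,x̄)²/(2τ)`
over the admissible class `S`. -/
def InResolvent {α : Type*} (φ : α → ℝ≥0∞) (d : α → α → ℝ≥0∞) (S : Set α)
    (τ : ℝ) (xbar y : α) : Prop :=
  y ∈ S ∧ ∀ z ∈ S,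
    φ y + d y xbar ^ 2 / ENNReal.ofReal (2 * τ) ≤ φ z + d z xbar ^ 2 / ENNReal.ofReal (2 * τ)

/-- A discrete solution of the minimizing movement scheme: a piecewise constant curve
obtained by iterating the resolvent along the partition `P`, starting from `xbar`. -/
def IsDiscreteSolution {α : Type*} (φ : α → ℝ≥0∞) (d : α → α → ℝ≥0∞) (S : Set α)
    (P : StepPartition) (xbar : α) (X : ℝ → α) : Prop :=
  ∃ y : ℕ → α, y 0 = xbar ∧ (∀ j : ℕ, InResolvent φ d S (P.τ j) (y j) (y (j + 1))) ∧
    X 0 = xbar ∧ ∀ j : ℕ, ∀ t : ℝ, P.time j < t → t ≤ P.time (j + 1) → X t = y (j + 1)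

/-- `x` is a generalized minimizing movement for `φ` starting from `x0`, with respect to
the distance `d`, the admissible class `S` and the weak (sequential) convergence `conv`. -/
def IsGMM {α : Type*} (φ : α → ℝ≥0∞) (d : α → α → ℝ≥0∞) (S : Set α)
    (conv : (ℕ → α) → α → Prop) (x0 : α) (x : ℝ → α) : Prop :=
  ∃ (P : ℕ → StepPartition) (xb : ℕ → α) (X : ℕ → ℝ → α),
    Tendsto (fun k => (P k).mesh) atTop (𝓝 0) ∧
    (∀ k, IsDiscreteSolution φ d S (P k) (xb k) (X k)) ∧
    Tendsto (fun k => φ (xb k)) atTop (𝓝 (φ x0)) ∧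
    Filter.limsup (fun k => d (X k 0) x0) atTop < ∞ ∧
    ∀ t : ℝ, 0 ≤ t → conv (fun k => X k t) (x t)

/-- `F ∈ L¹_t L^p_x([0,T] × ℝⁿ)`. -/
def MemL1tLpx {n : ℕ} (T : ℝ) (p : ℝ≥0∞) (F : ℝ → Eu n → ℝ) : Prop :=
  Measurable (fun z : ℝ × Eu n => F z.1 z.2) ∧
  (∫⁻ t in Set.Ioc (0:ℝ) T, eLpNorm (F t) p volume) < ∞

/-- `D` is the weak spatial divergence of the flux `v f`:
`∫∫ ⟪∇φ, v_t⟫ f_t = ∫∫ φ D_t` for all test functions. -/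
def IsWeakDiv {n : ℕ} (T : ℝ) (f : ℝ → Eu n → ℝ) (v : ℝ → Eu n → Eu n)
    (D : ℝ → Eu n → ℝ) : Prop :=
  ∀ φ : ℝ → Eu n → ℝ, IsTestFun T φ →
    (∫ t in Set.Ioc (0:ℝ) T, ∫ x, ⟪gradient (fun y => φ t y) x, v t x⟫ * f t x) =
      ∫ t in Set.Ioc (0:ℝ) T, ∫ x, φ t x * D t x

/-- `D` is the weak time derivative of `f`: `∫∫ ∂_tφ f_t = −∫∫ φ D_t`. -/
def IsWeakTimeDeriv {n : ℕ} (T : ℝ) (f D : ℝ → Eu n → ℝ) : Prop :=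
  ∀ φ : ℝ → Eu n → ℝ, IsTestFun T φ →
    (∫ t in Set.Ioc (0:ℝ) T, ∫ x, deriv (fun s => φ s x) t * f t x) =
      - ∫ t in Set.Ioc (0:ℝ) T, ∫ x, φ t x * D t x

/-- Integration of a function against a finite signed measure. -/
def sInt {n : ℕ} (s : SignedMeasure (Eu n)) (φ : Eu n → ℝ) : ℝ :=
  (∫ x, φ x ∂s.toJordanDecomposition.posPart) - ∫ x, φ x ∂s.toJordanDecomposition.negPart

/-- The total variation norm of a finite signed measure. -/
def tvNorm {n : ℕ} (s : SignedMeasure (Eu n)) : ℝ≥0∞ := s.totalVariation Set.univ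

/-- `D` is the (measure-valued) weak spatial divergence of the flux `v f`. -/
def IsWeakDivMeas {n : ℕ} (T : ℝ) (f : ℝ → Eu n → ℝ) (v : ℝ → Eu n → Eu n)
    (D : ℝ → SignedMeasure (Eu n)) : Prop :=
  ∀ φ : ℝ → Eu n → ℝ, IsTestFun T φ →
    (∫ t in Set.Ioc (0:ℝ) T, ∫ x, ⟪gradient (fun y => φ t y) x, v t x⟫ * f t x) =
      ∫ t in Set.Ioc (0:ℝ) T, sInt (D t) (φ t)

/-- `D` is the (measure-valued) weak time derivative of `f`. -/
def IsWeakTimeDerivMeas {n : ℕ} (T : ℝ) (f : ℝ → Eu n → ℝ)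
    (D : ℝ → SignedMeasure (Eu n)) : Prop :=
  ∀ φ : ℝ → Eu n → ℝ, IsTestFun T φ →
    (∫ t in Set.Ioc (0:ℝ) T, ∫ x, deriv (fun s => φ s x) t * f t x) =
      - ∫ t in Set.Ioc (0:ℝ) T, sInt (D t) (φ t)

/-- A strictly positive rapidly decreasing mollifier. -/
def IsMollifier {n : ℕ} (ρ : Eu n → ℝ) : Prop :=
  ContDiff ℝ (⊤ : ℕ∞) ρ ∧ (∀ x, 0 < ρ x) ∧ (∀ x y : Eu n, ‖x‖ = ‖y‖ → ρ x = ρ y) ∧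
    Tendsto ρ (Filter.cocompact (Eu n)) (𝓝 0) ∧ (∫ x, ρ x) = 1 ∧
    ∀ N : ℕ, Integrable (fun x => ‖x‖ ^ N * ρ x) (volume : Measure (Eu n))

/-- The rescaled mollifier `ρ_ε = ε^{-n} ρ(·/ε)`. -/
def scaleMoll {n : ℕ} (ρ : Eu n → ℝ) (ε : ℝ) (x : Eu n) : ℝ := (ε ^ n)⁻¹ * ρ (ε⁻¹ • x)

/-- The mollified density `f_t^ε = μ_t ⋆ ρ_ε`. -/
def mollDens {n : ℕ} (ρ : Eu n → ℝ) (ε : ℝ) (μ : Measure (Eu n)) (x : Eu n) : ℝ :=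
  ∫ y, scaleMoll ρ ε (x - y) ∂μ

/-- The mollified flux `E_t^ε = (v_t μ_t) ⋆ ρ_ε`. -/
def mollFlux {n : ℕ} (ρ : Eu n → ℝ) (ε : ℝ) (μ : Measure (Eu n)) (v : Eu n → Eu n)
    (x : Eu n) : Eu n :=
  ∫ y, scaleMoll ρ ε (x - y) • v y ∂μ

/-- The mollified velocity `v_t^ε = E_t^ε / f_t^ε`. -/
def mollVel {n : ℕ} (ρ : Eu n → ℝ) (ε : ℝ) (μ : Measure (Eu n)) (v : Eu n → Eu n)
    (x : Eu n) : Eu n :=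
  (mollDens ρ ε μ x)⁻¹ • mollFlux ρ ε μ v x

/-- The mollified measure `μ_t^ε = f_t^ε Lⁿ`. -/
def mollMeas {n : ℕ} (ρ : Eu n → ℝ) (ε : ℝ) (μ : Measure (Eu n)) : Measure (Eu n) :=
  volume.withDensity fun x => ENNReal.ofReal (mollDens ρ ε μ x)

instance pathMeasurableSpace (T : ℝ) (n : ℕ) :
    MeasurableSpace C(Set.Icc (0:ℝ) T, Eu n) := borel _

instance pathBorelSpace (T : ℝ) (n : ℕ) : BorelSpace C(Set.Icc (0:ℝ) T, Eu n) := ⟨rfl⟩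

/-- The set of absolutely continuous paths `ω : [0,T] → ℝⁿ` with `ω̇(t) = v_t(ω(t))`
for a.e. `t`. -/
def PathFlowSet {n : ℕ} (T : ℝ) (v : ℝ → Eu n → Eu n) :
    Set C(Set.Icc (0:ℝ) T, Eu n) :=
  {ω | ∃ ω' : ℝ → Eu n, IntegrableOn ω' (Set.Icc 0 T) volume ∧
      (∀ s t : ℝ, ∀ hs : s ∈ Set.Icc (0:ℝ) T, ∀ ht : t ∈ Set.Icc (0:ℝ) T, s ≤ t →
        ω ⟨t, ht⟩ - ω ⟨s, hs⟩ = ∫ r in Set.Ioc s t, ω' r) ∧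
      ∀ᵐ t ∂(volume.restrict (Set.Icc (0:ℝ) T)),
        ∀ ht : t ∈ Set.Icc (0:ℝ) T, ω' t = v t (ω ⟨t, ht⟩)}

end PL

/-- If probability measures `μ_j` converge narrowly to `μ`, then for every
lower semicontinuous `ψ : ℝⁿ → [0,∞]`, the `μ`-essential supremum of `ψ` is at most the
liminf of the `μ_j`-essential suprema of `ψ`. -/
theorem stmt5 (n : ℕ) (μs : ℕ → Measure (Eu n)) (μ : Measure (Eu n))
    (hμs : ∀ j, IsProbabilityMeasure (μs j)) (hμ : IsProbabilityMeasure μ)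
    (hconv : PL.NarrowTendsto atTop μs μ)
    (ψ : Eu n → ℝ≥0∞) (hψ : LowerSemicontinuous ψ) :
    essSup ψ μ ≤ Filter.liminf (fun j => essSup ψ (μs j)) atTop := by
  -- package as ProbabilityMeasure
  set P : ProbabilityMeasure (EuclideanSpace ℝ (Fin n)) := ⟨μ, hμ⟩
  set Ps : ℕ → ProbabilityMeasure (EuclideanSpace ℝ (Fin n)) := fun j => ⟨μs j, hμs j⟩
  have hT : Tendsto Ps atTop (𝓝 P) :=
    MeasureTheory.ProbabilityMeasure.tendsto_iff_forall_integral_tendsto.mpr hconv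
  apply le_of_forall_lt
  intro c0 hc0
  obtain ⟨c, hc0c, hc⟩ := exists_between hc0
  apply lt_of_lt_of_le hc0c
  -- U open, μ U > 0
  set U : Set (EuclideanSpace ℝ (Fin n)) := {x | c < ψ x}
  have hU : IsOpen U := hψ.isOpen_preimage c
  have hμU : 0 < μ U := by
    by_contra h
    push_neg at h
    have h0 : μ U = 0 := le_antisymm h zero_le
    have : essSup ψ μ ≤ c := essSup_le_of_ae_le c (by
      filter_upwards [measure_eq_zero_iff_ae_notMem.mp h0] with x hx
      simpa [U, not_lt] using hx)
    exact absurd (hc.trans_le this) (lt_irrefl c)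
  have hport : μ U ≤ Filter.liminf (fun j => μs j U) atTop :=
    MeasureTheory.ProbabilityMeasure.le_liminf_measure_open_of_tendsto hT hU
  have hev : ∀ᶠ j in atTop, 0 < μs j U :=
    eventually_lt_of_lt_liminf (lt_of_lt_of_le hμU hport)
  have hev2 : ∀ᶠ j in atTop, c ≤ essSup ψ (μs j) := by
    filter_upwards [hev] with j hj
    by_contra h
    push_neg at h
    have : μs j U = 0 := by
      have := ENNReal.ae_le_essSup (μ := μs j) ψ
      rw [measure_eq_zero_iff_ae_notMem]
      filter_upwards [this] with x hx hxU
      exact absurd (lt_of_lt_of_le (lt_of_le_of_lt hx h) (le_of_lt hxU)) (lt_irrefl _)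
    exact absurd this hj.ne'
  calc c = Filter.liminf (fun _ : ℕ => c) atTop := by simp
    _ ≤ Filter.liminf (fun j => essSup ψ (μs j)) atTop := liminf_le_liminf hev2
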